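/- arXiv:2512.23543 — 2 statements merged into one kernel-verified Lean document; each statement's English description precedes it below -/
import Mathlib

section
/- Let G be a finite simple graph containing a vertex v of odd degree such that every other vertex w of odd degree satisfies d(v, w) ≥ 3. Then G admits no adapted complex structure. -/
/-!  Framework: the 2-step nilpotent Lie algebra `𝔫_G` associated to a finite simple
graph `G` (Dani–Mainkar construction), and adapted complex structures on it. -/

open scoped BigOperators

namespace GraphLie

variable {V : Type*} [Fintype V] [LinearOrder V]

/-- The underlying real vector space of the Lie algebra `𝔫_G` associated to a graph `G`:
real-valued functions on its basis `V ⊕ G.edgeSet` (vertices and edges). -/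
abbrev Niln (G : SimpleGraph V) : Type _ := (V ⊕ G.edgeSet) → ℝ

variable (G : SimpleGraph V) [DecidableRel G.Adj]

/-- The basis vector of `𝔫_G` corresponding to the vertex `v`. -/
noncomputable def vtx (v : V) : Niln G := Pi.single (Sum.inl v) 1

/-- The basis vector of `𝔫_G` corresponding to the edge `e`. -/
noncomputable def edg (e : G.edgeSet) : Niln G := Pi.single (Sum.inr e) 1

/-- The basis vector of `𝔫_G` corresponding to a vertex or an edge. -/
noncomputable def basisVec (b : V ⊕ G.edgeSet) : Niln G := Pi.single b 1

/-- The bracket of two vertex generators: for adjacent vertices `i < j` (with respect to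
the chosen labeling of the vertices) `[v_i, v_j] = e_{i,j}` and `[v_j, v_i] = -e_{i,j}`;
non-adjacent vertices commute. -/
noncomputable def bracketVtx (i j : V) : Niln G :=
  if h : G.Adj i j then
    (if i < j then edg G ⟨s(i, j), G.mem_edgeSet.mpr h⟩
     else - edg G ⟨s(i, j), G.mem_edgeSet.mpr h⟩)
  else 0

/-- The Lie bracket of `𝔫_G`, extended bilinearly from the generators; all the
edge generators are central. -/
noncomputable def bracket (x y : Niln G) : Niln G :=
  ∑ i : V, ∑ j : V, (x (Sum.inl i) * y (Sum.inl j)) • bracketVtx G i j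

/-- An adapted complex structure on the graph `G`: a linear endomorphism `J` of `𝔫_G`
with `J ∘ J = -id`, whose Nijenhuis tensor vanishes, and which sends each basis vector
(vertex or edge) to plus or minus a basis vector. -/
structure AdaptedCS : Type _ where
  J : Niln G →ₗ[ℝ] Niln G
  j_squared : ∀ x, J (J x) = -x
  integrable : ∀ x y,
    bracket G x y + J (bracket G (J x) y + bracket G x (J y)) - bracket G (J x) (J y) = 0
  adapted : ∀ b : V ⊕ G.edgeSet,
    (∃ b', J (basisVec G b) = basisVec G b') ∨ (∃ b', J (basisVec G b) = - basisVec G b')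

variable {G}

/-- An edge of `G` joining vertices `v` and `w` is distinguished if `Jv = w` or `Jw = v`. -/
def AdaptedCS.Distinguished (Jc : AdaptedCS G) (e : G.edgeSet) : Prop :=
  ∃ v w : V, (e : Sym2 V) = s(v, w) ∧
    (Jc.J (vtx G v) = vtx G w ∨ Jc.J (vtx G w) = vtx G v)

end GraphLie

set_option linter.unusedSectionVars false

namespace GraphLie

/-- A real number which is `1` or `-1`. -/
def IsSign (c : ℝ) : Prop := c = 1 ∨ c = -1

lemma IsSign.ne_zero {c : ℝ} (h : IsSign c) : c ≠ 0 := by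
  rcases h with h | h <;> rw [h] <;> norm_num

lemma IsSign.mul {c d : ℝ} (hc : IsSign c) (hd : IsSign d) : IsSign (c * d) := by
  rcases hc with h | h <;> rcases hd with h' | h' <;> rw [h, h'] <;> [left; right; right; left] <;> norm_num

lemma IsSign.neg {c : ℝ} (hc : IsSign c) : IsSign (-c) := by
  rcases hc with h | h <;> rw [h] <;> [right; left] <;> norm_num

section Singles

variable {I : Type*} [DecidableEq I]

lemma single_smul_ne_zero {c : ℝ} (hc : c ≠ 0) (b : I) :
    c • (Pi.single b 1 : I → ℝ) ≠ 0 := by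
  intro h
  have := congrFun h b
  simp [Pi.single_apply] at this
  exact hc this

lemma eq_of_smul_single_eq {c d : ℝ} {x y : I} (hc : c ≠ 0)
    (h : c • (Pi.single x 1 : I → ℝ) = d • (Pi.single y 1 : I → ℝ)) : x = y := by
  by_contra hxy
  have := congrFun h x
  simp [Pi.single_apply, hxy, Ne.symm hxy] at this
  exact hc this

lemma two_single_eq {c₁ c₂ : ℝ} {x₁ x₂ : I} (hc : c₁ ≠ 0)
    (h : c₁ • (Pi.single x₁ 1 : I → ℝ) + c₂ • (Pi.single x₂ 1 : I → ℝ) = 0) : x₁ = x₂ := by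
  by_contra hxy
  have := congrFun h x₁
  simp [Pi.single_apply, hxy, Ne.symm hxy] at this
  exact hc this

lemma smul_single_eq {c d : ℝ} {x y : I} (hc : c ≠ 0)
    (h : c • (Pi.single x 1 : I → ℝ) = d • (Pi.single y 1 : I → ℝ)) : x = y ∧ c = d := by
  have hxy := eq_of_smul_single_eq hc h
  subst hxy
  have := congrFun h x
  simp [Pi.single_apply] at this
  exact ⟨rfl, this⟩

lemma three_single_ne {c₁ c₂ c₃ : ℝ} (h₁ : IsSign c₁) (h₂ : IsSign c₂) (h₃ : IsSign c₃)
    (b₁ b₂ b₃ : I) :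
    c₁ • (Pi.single b₁ 1 : I → ℝ) + c₂ • (Pi.single b₂ 1 : I → ℝ)
      + c₃ • (Pi.single b₃ 1 : I → ℝ) ≠ 0 := by
  intro h
  have e : ∀ x : I, c₁ * (if x = b₁ then (1:ℝ) else 0) + c₂ * (if x = b₂ then 1 else 0)
      + c₃ * (if x = b₃ then 1 else 0) = 0 := by
    intro x
    have := congrFun h x
    simpa [Pi.single_apply] using this
  by_cases h12 : b₁ = b₂
  · by_cases h13 : b₁ = b₃
    · subst h12; subst h13
      have := e b₁
      simp at this
      rcases h₁ with h₁ | h₁ <;> rcases h₂ with h₂ | h₂ <;> rcases h₃ with h₃ | h₃ <;>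
        rw [h₁, h₂, h₃] at this <;> norm_num at this
    · subst h12
      have := e b₃
      simp [Ne.symm h13] at this
      exact h₃.ne_zero this
  · by_cases h13 : b₁ = b₃
    · subst h13
      have := e b₂
      simp [Ne.symm h12] at this
      exact h₂.ne_zero this
    · have := e b₁
      simp [h12, h13] at this
      exact h₁.ne_zero this

end Singles

lemma even_card_invol {α : Type*} [DecidableEq α] (s : Finset α) (σ : α → α)
    (h1 : ∀ u ∈ s, σ u ∈ s) (h2 : ∀ u ∈ s, σ (σ u) = u) (h3 : ∀ u ∈ s, σ u ≠ u) :
    Even s.card := by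
  induction s using Finset.strongInduction with
  | _ s ih =>
    rcases s.eq_empty_or_nonempty with rfl | ⟨u, hu⟩
    · simp
    · have hσu : σ u ∈ s := h1 u hu
      have hne : σ u ≠ u := h3 u hu
      set t := (s.erase u).erase (σ u) with ht
      have hts : t ⊂ s := by
        refine Finset.ssubset_of_subset_of_ssubset ?_ (Finset.erase_ssubset hu)
        exact Finset.erase_subset _ _
      have hmem : ∀ x, x ∈ t ↔ x ∈ s ∧ x ≠ u ∧ x ≠ σ u := by
        intro x
        simp [ht, Finset.mem_erase, and_comm, and_assoc]
        tauto
      have het : Even t.card := by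
        refine ih t hts (fun x hx => ?_) (fun x hx => h2 x ((hmem x).mp hx).1)
          (fun x hx => h3 x ((hmem x).mp hx).1)
        obtain ⟨hxs, hxu, hxσu⟩ := (hmem x).mp hx
        refine (hmem (σ x)).mpr ⟨h1 x hxs, ?_, ?_⟩
        · intro hh
          exact hxσu (by rw [← h2 x hxs, hh])
        · intro hh
          have := congrArg σ hh
          rw [h2 x hxs, h2 u hu] at this
          exact hxu this
      have hcard : s.card = t.card + 2 := by
        have h1' : (s.erase u).card = s.card - 1 := Finset.card_erase_of_mem hu
        have h2' : t.card = (s.erase u).card - 1 :=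
          Finset.card_erase_of_mem (Finset.mem_erase.mpr ⟨hne, hσu⟩)
        have hpos : 0 < s.card := Finset.card_pos.mpr ⟨u, hu⟩
        have hpos2 : 0 < (s.erase u).card :=
          Finset.card_pos.mpr ⟨σ u, Finset.mem_erase.mpr ⟨hne, hσu⟩⟩
        omega
      rw [hcard]
      rcases het with ⟨k, hk⟩
      exact ⟨k + 1, by omega⟩

end GraphLie
namespace GraphLie

section Bracket

variable {V : Type*} [Fintype V] [LinearOrder V]
variable (G : SimpleGraph V) [DecidableRel G.Adj]

lemma vtx_def (a : V) : vtx G a = basisVec G (Sum.inl a) := rfl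

lemma edg_def (e : G.edgeSet) : edg G e = basisVec G (Sum.inr e) := rfl

/-- The sign `esgn i j` with which the edge basis vector occurs in `[v_i, v_j]`. -/
def esgn (i j : V) : ℝ := if i < j then 1 else -1

lemma isSign_esgn (i j : V) : IsSign (esgn i j) := by
  unfold esgn IsSign; split_ifs <;> simp

lemma bracketVtx_adj {i j : V} (h : G.Adj i j) :
    bracketVtx G i j = esgn i j • basisVec G (Sum.inr ⟨s(i, j), G.mem_edgeSet.mpr h⟩) := by
  unfold bracketVtx esgn
  rw [dif_pos h]
  split_ifs <;> simp [edg_def]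

lemma bracketVtx_not_adj {i j : V} (h : ¬ G.Adj i j) : bracketVtx G i j = 0 := dif_neg h

lemma bracket_vtx_vtx (i j : V) : bracket G (vtx G i) (vtx G j) = bracketVtx G i j := by
  unfold bracket
  rw [Finset.sum_eq_single i]
  · rw [Finset.sum_eq_single j]
    · simp [vtx, Pi.single_apply]
    · intro j' _ hj'; simp [vtx, Pi.single_apply, hj']
    · simp
  · intro i' _ hi'
    apply Finset.sum_eq_zero
    intro j' _
    simp [vtx, Pi.single_apply, hi']
  · simp

lemma bracket_smul_left (c : ℝ) (x y : Niln G) :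
    bracket G (c • x) y = c • bracket G x y := by
  unfold bracket
  rw [Finset.smul_sum]
  refine Finset.sum_congr rfl fun i _ => ?_
  rw [Finset.smul_sum]
  refine Finset.sum_congr rfl fun j _ => ?_
  simp [smul_smul, mul_assoc]

lemma bracket_smul_right (c : ℝ) (x y : Niln G) :
    bracket G x (c • y) = c • bracket G x y := by
  unfold bracket
  rw [Finset.smul_sum]
  refine Finset.sum_congr rfl fun i _ => ?_
  rw [Finset.smul_sum]
  refine Finset.sum_congr rfl fun j _ => ?_
  simp [smul_smul]
  ring_nf

lemma bracket_inr_left (e : G.edgeSet) (y : Niln G) :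
    bracket G (basisVec G (Sum.inr e)) y = 0 := by
  unfold bracket
  apply Finset.sum_eq_zero
  intro i _
  apply Finset.sum_eq_zero
  intro j _
  simp [basisVec, Pi.single_apply]

lemma bracket_inr_right (x : Niln G) (e : G.edgeSet) :
    bracket G x (basisVec G (Sum.inr e)) = 0 := by
  unfold bracket
  apply Finset.sum_eq_zero
  intro i _
  apply Finset.sum_eq_zero
  intro j _
  simp [basisVec, Pi.single_apply]

/-- The bracket of two basis vectors, as a function of the indices. -/
noncomputable def bb : (V ⊕ G.edgeSet) → (V ⊕ G.edgeSet) → Niln G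
  | Sum.inl i, Sum.inl j => bracketVtx G i j
  | Sum.inl _, Sum.inr _ => 0
  | Sum.inr _, _ => 0

lemma bb_inl_inl (i j : V) : bb G (Sum.inl i) (Sum.inl j) = bracketVtx G i j := rfl

lemma bb_inr_left (e : G.edgeSet) (x : V ⊕ G.edgeSet) : bb G (Sum.inr e) x = 0 := rfl

lemma bb_inr_right (x : V ⊕ G.edgeSet) (e : G.edgeSet) : bb G x (Sum.inr e) = 0 := by
  cases x <;> rfl

lemma bracket_basis (b b' : V ⊕ G.edgeSet) :
    bracket G (basisVec G b) (basisVec G b') = bb G b b' := by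
  cases b with
  | inl i =>
    cases b' with
    | inl j => exact bracket_vtx_vtx G i j
    | inr e => exact bracket_inr_right G _ e
  | inr e => exact bracket_inr_left G e _

end Bracket

end GraphLie
namespace GraphLie

section JStruct

variable {V : Type*} [Fintype V] [LinearOrder V]
variable {G : SimpleGraph V} [DecidableRel G.Adj]

lemma AdaptedCS.exists_rep (Jc : AdaptedCS G) (b : V ⊕ G.edgeSet) :
    ∃ p : (V ⊕ G.edgeSet) × ℝ, IsSign p.2 ∧ Jc.J (basisVec G b) = p.2 • basisVec G p.1 := by
  rcases Jc.adapted b with ⟨b', hb'⟩ | ⟨b', hb'⟩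
  · exact ⟨(b', 1), Or.inl rfl, by simpa using hb'⟩
  · exact ⟨(b', -1), Or.inr rfl, by simpa using hb'⟩

/-- The signed permutation of the basis induced by an adapted complex structure: index part. -/
noncomputable def AdaptedCS.pmap (Jc : AdaptedCS G) (b : V ⊕ G.edgeSet) : V ⊕ G.edgeSet :=
  (Jc.exists_rep b).choose.1

/-- The signed permutation of the basis induced by an adapted complex structure: sign part. -/
noncomputable def AdaptedCS.sgn (Jc : AdaptedCS G) (b : V ⊕ G.edgeSet) : ℝ :=
  (Jc.exists_rep b).choose.2

lemma AdaptedCS.sgn_isSign (Jc : AdaptedCS G) (b : V ⊕ G.edgeSet) : IsSign (Jc.sgn b) :=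
  (Jc.exists_rep b).choose_spec.1

lemma AdaptedCS.J_basis (Jc : AdaptedCS G) (b : V ⊕ G.edgeSet) :
    Jc.J (basisVec G b) = Jc.sgn b • basisVec G (Jc.pmap b) :=
  (Jc.exists_rep b).choose_spec.2

lemma AdaptedCS.quasi (Jc : AdaptedCS G) (b : V ⊕ G.edgeSet) :
    Jc.pmap (Jc.pmap b) = b ∧ Jc.sgn b * Jc.sgn (Jc.pmap b) = -1 := by
  have h := Jc.j_squared (basisVec G b)
  rw [Jc.J_basis, map_smul, Jc.J_basis, smul_smul] at h
  have h' : (Jc.sgn b * Jc.sgn (Jc.pmap b)) •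
      (Pi.single (Jc.pmap (Jc.pmap b)) 1 : (V ⊕ G.edgeSet) → ℝ) =
      (-1 : ℝ) • (Pi.single b 1 : (V ⊕ G.edgeSet) → ℝ) := by
    rw [show ((Pi.single (Jc.pmap (Jc.pmap b)) 1 : (V ⊕ G.edgeSet) → ℝ)) =
      basisVec G (Jc.pmap (Jc.pmap b)) from rfl,
      show ((Pi.single b 1 : (V ⊕ G.edgeSet) → ℝ)) = basisVec G b from rfl, h, neg_one_smul]
  have hc := ((Jc.sgn_isSign b).mul (Jc.sgn_isSign (Jc.pmap b))).ne_zero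
  obtain ⟨hx, hcd⟩ := smul_single_eq hc h'
  exact ⟨hx, hcd⟩

lemma AdaptedCS.pmap_pmap (Jc : AdaptedCS G) (b : V ⊕ G.edgeSet) :
    Jc.pmap (Jc.pmap b) = b := (Jc.quasi b).1

lemma AdaptedCS.sgn_mul (Jc : AdaptedCS G) (b : V ⊕ G.edgeSet) :
    Jc.sgn b * Jc.sgn (Jc.pmap b) = -1 := (Jc.quasi b).2

lemma AdaptedCS.pmap_ne (Jc : AdaptedCS G) (b : V ⊕ G.edgeSet) : Jc.pmap b ≠ b := by
  intro hh
  have h := Jc.sgn_mul b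
  rw [hh] at h
  rcases Jc.sgn_isSign b with h' | h' <;> rw [h'] at h <;> norm_num at h

lemma AdaptedCS.pmap_inj (Jc : AdaptedCS G) {b b' : V ⊕ G.edgeSet}
    (h : Jc.pmap b = Jc.pmap b') : b = b' := by
  have := congrArg Jc.pmap h
  rwa [Jc.pmap_pmap, Jc.pmap_pmap] at this

lemma AdaptedCS.nij (Jc : AdaptedCS G) (a b : V) :
    bracketVtx G a b
      + (Jc.sgn (Sum.inl a) • Jc.J (bb G (Jc.pmap (Sum.inl a)) (Sum.inl b))
        + Jc.sgn (Sum.inl b) • Jc.J (bb G (Sum.inl a) (Jc.pmap (Sum.inl b))))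
      - (Jc.sgn (Sum.inl b) * Jc.sgn (Sum.inl a)) •
          bb G (Jc.pmap (Sum.inl a)) (Jc.pmap (Sum.inl b)) = 0 := by
  have H := Jc.integrable (vtx G a) (vtx G b)
  simp only [vtx_def] at H
  simp only [Jc.J_basis, bracket_smul_left, bracket_smul_right, map_add, map_smul,
    smul_smul, bracket_basis, bb_inl_inl] at H
  exact H

end JStruct

end GraphLie
namespace GraphLie

section Claims

variable {V : Type*} [Fintype V] [LinearOrder V]
variable {G : SimpleGraph V} [DecidableRel G.Adj]

lemma basisVec_def (b : V ⊕ G.edgeSet) : basisVec G b = Pi.single b 1 := rfl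

/-- Generic parity lemma: if every member of `s` has a `J`-partner vertex in `s`,
then `s` has even cardinality. -/
lemma even_of_nbr (Jc : AdaptedCS G) (s : Finset V)
    (hs : ∀ u ∈ s, ∃ u', Jc.pmap (Sum.inl u) = Sum.inl u' ∧ u' ∈ s) : Even s.card := by
  apply even_card_invol s (fun u => Sum.elim id (fun _ => u) (Jc.pmap (Sum.inl u)))
  · intro u hu
    obtain ⟨u', hpu, hu's⟩ := hs u hu
    simpa [hpu] using hu's
  · intro u hu
    obtain ⟨u', hpu, hu's⟩ := hs u hu
    have hpu' : Jc.pmap (Sum.inl u') = Sum.inl u := by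
      rw [← hpu, Jc.pmap_pmap]
    simp [hpu, hpu']
  · intro u hu
    obtain ⟨u', hpu, hu's⟩ := hs u hu
    simp only [hpu, Sum.elim_inl, id_eq]
    intro hh
    exact Jc.pmap_ne (Sum.inl u) (by rw [hpu, hh])

/-- If `Jv` is an edge, then every neighbour of `v` has a `J`-partner
which is a vertex, again adjacent to `v`. -/
lemma claimA (Jc : AdaptedCS G) {v u : V} {f : G.edgeSet}
    (hpv : Jc.pmap (Sum.inl v) = Sum.inr f) (hu : G.Adj v u) :
    ∃ u', Jc.pmap (Sum.inl u) = Sum.inl u' ∧ G.Adj v u' := by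
  have H := Jc.nij v u
  rw [hpv] at H
  simp only [bb_inr_left, map_zero, smul_zero, zero_add, sub_zero] at H
  cases hpu : Jc.pmap (Sum.inl u) with
  | inr g =>
    exfalso
    rw [hpu, bb_inr_right, map_zero, smul_zero, add_zero, bracketVtx_adj G hu,
      basisVec_def] at H
    exact single_smul_ne_zero (isSign_esgn v u).ne_zero _ H
  | inl u' =>
    refine ⟨u', rfl, ?_⟩
    by_contra hnadj
    rw [hpu, bb_inl_inl, bracketVtx_not_adj G hnadj, map_zero, smul_zero, add_zero,
      bracketVtx_adj G hu, basisVec_def] at H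
    exact single_smul_ne_zero (isSign_esgn v u).ne_zero _ H

/-- A vertex of odd degree has a `J`-partner which is a vertex. -/
lemma oddToVtx (Jc : AdaptedCS G) {v : V} (hv : Odd (G.degree v)) :
    ∃ w, Jc.pmap (Sum.inl v) = Sum.inl w := by
  cases hpv : Jc.pmap (Sum.inl v) with
  | inl w => exact ⟨w, rfl⟩
  | inr f =>
    exfalso
    have heven : Even (G.degree v) := by
      rw [← SimpleGraph.card_neighborFinset_eq_degree]
      refine even_of_nbr Jc _ fun u hu => ?_
      rw [SimpleGraph.mem_neighborFinset] at hu
      obtain ⟨u', hpu, hadj⟩ := claimA Jc hpv hu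
      exact ⟨u', hpu, (SimpleGraph.mem_neighborFinset _ _ _).mpr hadj⟩
    exact (Nat.not_odd_iff_even.mpr heven) hv

/-- If `Jv = ±w` (both vertices) and `u` is a neighbour of `v` not equal nor adjacent
to `w`, whose `J`-partner is a vertex `u'`, then `u'` is adjacent to `v`. -/
lemma claimB (Jc : AdaptedCS G) {v w u u' : V}
    (hpv : Jc.pmap (Sum.inl v) = Sum.inl w) (hu : G.Adj v u)
    (hwu : ¬ G.Adj w u) (hune : u ≠ w)
    (hpu : Jc.pmap (Sum.inl u) = Sum.inl u') : G.Adj v u' := by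
  have hvw : v ≠ w := by
    intro hh
    exact Jc.pmap_ne (Sum.inl v) (by rw [hpv, hh])
  have H := Jc.nij v u
  rw [hpv, hpu] at H
  rw [bb_inl_inl, bb_inl_inl, bb_inl_inl, bracketVtx_not_adj G hwu, map_zero, smul_zero,
    zero_add] at H
  by_contra hnadj
  rw [bracketVtx_not_adj G hnadj, map_zero, smul_zero, add_zero] at H
  by_cases hwu' : G.Adj w u'
  · rw [bracketVtx_adj G hu, bracketVtx_adj G hwu'] at H
    rw [sub_eq_zero, smul_smul, basisVec_def, basisVec_def] at H
    have hkey := (smul_single_eq (isSign_esgn v u).ne_zero H).1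
    have he : s(v, u) = s(w, u') := by
      have := Sum.inr.inj hkey
      exact Subtype.ext_iff.mp this
    rcases Sym2.eq_iff.mp he with ⟨hh, _⟩ | ⟨_, hh⟩
    · exact hvw hh
    · exact hune hh
  · rw [bracketVtx_not_adj G hwu', smul_zero, sub_zero, bracketVtx_adj G hu,
      basisVec_def] at H
    exact single_smul_ne_zero (isSign_esgn v u).ne_zero _ H

/-- If `Jv = ±w` and a neighbour `u` of `v` has `J`-partner an edge, then `u` is
also a neighbour of `w`. -/
lemma claimC (Jc : AdaptedCS G) {v w u : V} {g : G.edgeSet}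
    (hpv : Jc.pmap (Sum.inl v) = Sum.inl w) (hu : G.Adj v u)
    (hpu : Jc.pmap (Sum.inl u) = Sum.inr g) : G.Adj w u := by
  have H := Jc.nij v u
  rw [hpv, hpu] at H
  rw [bb_inr_right, bb_inr_right, map_zero, smul_zero, add_zero, smul_zero, sub_zero,
    bb_inl_inl] at H
  by_contra hnadj
  rw [bracketVtx_not_adj G hnadj, map_zero, smul_zero, add_zero, bracketVtx_adj G hu,
    basisVec_def] at H
  exact single_smul_ne_zero (isSign_esgn v u).ne_zero _ H

/-- If `Jv = ±w`, `u` is a common neighbour of `v` and `w` with `J`-partner a vertex `u'`,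
then `u'` cannot be adjacent to `v` but not `w`. -/
lemma claimD (Jc : AdaptedCS G) {v w u u' : V}
    (hpv : Jc.pmap (Sum.inl v) = Sum.inl w) (hu : G.Adj v u) (hwu : G.Adj w u)
    (hpu : Jc.pmap (Sum.inl u) = Sum.inl u')
    (h1 : G.Adj v u') (h2 : ¬ G.Adj w u') : False := by
  have H := Jc.nij v u
  rw [hpv, hpu] at H
  rw [bb_inl_inl, bb_inl_inl, bb_inl_inl, bracketVtx_not_adj G h2, smul_zero, sub_zero,
    bracketVtx_adj G hu, bracketVtx_adj G hwu, bracketVtx_adj G h1] at H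
  simp only [map_smul, Jc.J_basis, smul_smul] at H
  simp only [basisVec_def, ← add_assoc] at H
  refine three_single_ne ?_ ?_ ?_ _ _ _ H
  · exact isSign_esgn v u
  · exact ((Jc.sgn_isSign _).mul ((isSign_esgn w u).mul (Jc.sgn_isSign _)))
  · exact ((Jc.sgn_isSign _).mul ((isSign_esgn v u').mul (Jc.sgn_isSign _)))

end Claims

end GraphLie
namespace GraphLie

section Main

variable {V : Type*} [Fintype V] [LinearOrder V]
variable {G : SimpleGraph V} [DecidableRel G.Adj]

/-- If `Jv = ±w` with `v` of odd degree, then `w` is at distance at most 2 from `v`. -/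
lemma close (Jc : AdaptedCS G) {v w : V} (hpv : Jc.pmap (Sum.inl v) = Sum.inl w)
    (hv : Odd (G.degree v)) : G.Adj v w ∨ ∃ z, G.Adj v z ∧ G.Adj w z := by
  by_contra hno
  push_neg at hno
  obtain ⟨hnadj, hcomm⟩ := hno
  have heven : Even (G.degree v) := by
    rw [← SimpleGraph.card_neighborFinset_eq_degree]
    refine even_of_nbr Jc _ fun u hu => ?_
    rw [SimpleGraph.mem_neighborFinset] at hu
    have hwu : ¬ G.Adj w u := hcomm u hu
    have hune : u ≠ w := by rintro rfl; exact hnadj hu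
    cases hpu : Jc.pmap (Sum.inl u) with
    | inr g => exact absurd (claimC Jc hpv hu hpu) hwu
    | inl u' =>
      exact ⟨u', rfl, (SimpleGraph.mem_neighborFinset _ _ _).mpr
        (claimB Jc hpv hu hwu hune hpu)⟩
  exact (Nat.not_odd_iff_even.mpr heven) hv

/-- If `Jv = ±w` (two vertices), then `v` and `w` have degrees of the same parity. -/
lemma parity (Jc : AdaptedCS G) {v w : V} (hpv : Jc.pmap (Sum.inl v) = Sum.inl w) :
    Even (G.degree v + G.degree w) := by
  classical
  have hpw : Jc.pmap (Sum.inl w) = Sum.inl v := by rw [← hpv, Jc.pmap_pmap]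
  have hvw : v ≠ w := fun hh => Jc.pmap_ne (Sum.inl v) (by rw [hpv, hh])
  set PL : V → Prop := fun u => ∃ x, Jc.pmap (Sum.inl u) = Sum.inl x with hPL
  have decomp : ∀ a b : V,
      (G.neighborFinset a).card
        = ((G.neighborFinset a).filter (fun u => ¬ PL u)).card
          + (((G.neighborFinset a).filter (fun u => PL u ∧ G.Adj b u)).card
          + (((G.neighborFinset a).filter (fun u => (PL u ∧ ¬ G.Adj b u) ∧ ¬ (u = b))).card
          + ((G.neighborFinset a).filter (fun u => (PL u ∧ ¬ G.Adj b u) ∧ u = b)).card)) := by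
    intro a b
    have h1 := Finset.card_filter_add_card_filter_not
      (s := G.neighborFinset a) (p := PL)
    have h2 := Finset.card_filter_add_card_filter_not
      (s := (G.neighborFinset a).filter PL) (p := fun u => G.Adj b u)
    have h3 := Finset.card_filter_add_card_filter_not
      (s := ((G.neighborFinset a).filter PL).filter (fun u => ¬ G.Adj b u))
      (p := fun u => u = b)
    simp only [Finset.filter_filter] at h2 h3
    omega
  -- the `A`-parts agree
  have hA : (G.neighborFinset v).filter (fun u => ¬ PL u)
      = (G.neighborFinset w).filter (fun u => ¬ PL u) := by
    ext u
    simp only [Finset.mem_filter, SimpleGraph.mem_neighborFinset]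
    constructor
    · rintro ⟨hadj, hnpl⟩
      refine ⟨?_, hnpl⟩
      cases hpu : Jc.pmap (Sum.inl u) with
      | inl x => exact absurd ⟨x, hpu⟩ hnpl
      | inr g => exact claimC Jc hpv hadj hpu
    · rintro ⟨hadj, hnpl⟩
      refine ⟨?_, hnpl⟩
      cases hpu : Jc.pmap (Sum.inl u) with
      | inl x => exact absurd ⟨x, hpu⟩ hnpl
      | inr g => exact claimC Jc hpw hadj hpu
  -- the `C`-parts agree
  have hC : (G.neighborFinset v).filter (fun u => PL u ∧ G.Adj w u)
      = (G.neighborFinset w).filter (fun u => PL u ∧ G.Adj v u) := by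
    ext u
    simp only [Finset.mem_filter, SimpleGraph.mem_neighborFinset]
    tauto
  -- the `W`-parts agree
  have hWgen : ∀ a b : V, Jc.pmap (Sum.inl b) = Sum.inl a →
      (G.neighborFinset a).filter (fun u => (PL u ∧ ¬ G.Adj b u) ∧ u = b)
        = if G.Adj a b then {b} else ∅ := by
    intro a b hpb
    split_ifs with hadj
    · ext u
      simp only [Finset.mem_filter, SimpleGraph.mem_neighborFinset, Finset.mem_singleton]
      constructor
      · rintro ⟨_, _, rfl⟩; rfl
      · rintro rfl
        exact ⟨hadj, ⟨⟨a, hpb⟩, G.loopless.irrefl _⟩, rfl⟩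
    · ext u
      simp only [Finset.mem_filter, SimpleGraph.mem_neighborFinset, Finset.notMem_empty,
        iff_false]
      rintro ⟨hadj', _, rfl⟩
      exact hadj hadj'
  have hW : ((G.neighborFinset v).filter (fun u => (PL u ∧ ¬ G.Adj w u) ∧ u = w)).card
      = ((G.neighborFinset w).filter (fun u => (PL u ∧ ¬ G.Adj v u) ∧ u = v)).card := by
    rw [hWgen v w hpw, hWgen w v hpv]
    by_cases hadj : G.Adj v w
    · rw [if_pos hadj, if_pos (hadj.symm)]
      simp
    · rw [if_neg hadj, if_neg (fun hh => hadj hh.symm)]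
  -- the `X`-parts are even
  have hXgen : ∀ a b : V, Jc.pmap (Sum.inl a) = Sum.inl b → Jc.pmap (Sum.inl b) = Sum.inl a →
      Even ((G.neighborFinset a).filter
        (fun u => (PL u ∧ ¬ G.Adj b u) ∧ ¬ (u = b))).card := by
    intro a b hpa hpb
    refine even_of_nbr Jc _ fun u hu => ?_
    simp only [Finset.mem_filter, SimpleGraph.mem_neighborFinset] at hu
    obtain ⟨hadj, ⟨hPLu, hbu⟩, hub⟩ := hu
    obtain ⟨u', hpu⟩ := hPLu
    have hpu' : Jc.pmap (Sum.inl u') = Sum.inl u := by rw [← hpu, Jc.pmap_pmap]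
    have hadj' : G.Adj a u' := claimB Jc hpa hadj hbu hub hpu
    refine ⟨u', hpu, ?_⟩
    simp only [Finset.mem_filter, SimpleGraph.mem_neighborFinset]
    refine ⟨hadj', ⟨⟨u, hpu'⟩, ?_⟩, ?_⟩
    · intro hbu'
      exact claimD Jc hpa hadj' hbu' hpu' hadj hbu
    · intro hh
      rw [hh] at hpu
      have : Sum.inl u = Sum.inl a := Jc.pmap_inj (hpu.trans hpa.symm)
      have : u = a := Sum.inl.inj this
      rw [this] at hadj
      exact G.loopless.irrefl a hadj
  obtain ⟨x, hx⟩ := hXgen v w hpv hpw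
  obtain ⟨y, hy⟩ := hXgen w v hpw hpv
  have d1 := decomp v w
  have d2 := decomp w v
  have hAc : ((G.neighborFinset v).filter (fun u => ¬ PL u)).card
      = ((G.neighborFinset w).filter (fun u => ¬ PL u)).card := by rw [hA]
  have hCc : ((G.neighborFinset v).filter (fun u => PL u ∧ G.Adj w u)).card
      = ((G.neighborFinset w).filter (fun u => PL u ∧ G.Adj v u)).card := by rw [hC]
  have hdv : G.degree v = (G.neighborFinset v).card :=
    (SimpleGraph.card_neighborFinset_eq_degree _ _).symm
  have hdw : G.degree w = (G.neighborFinset w).card :=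
    (SimpleGraph.card_neighborFinset_eq_degree _ _).symm
  refine ⟨(G.degree v + G.degree w) / 2, ?_⟩
  omega

end Main

end GraphLie
namespace GraphLie

variable {V : Type*} [Fintype V] [LinearOrder V]

/-- If `G` contains a vertex `v` of odd degree such that every other
odd-degree vertex is at distance at least `3` from `v`, then `G` admits no adapted
complex structure. -/
theorem statement10 (G : SimpleGraph V) [DecidableRel G.Adj] (v : V)
    (hv : Odd (G.degree v))
    (h : ∀ w : V, w ≠ v → Odd (G.degree w) → ¬ G.Reachable v w ∨ 3 ≤ G.dist v w) :
    IsEmpty (AdaptedCS G) := by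
  refine ⟨fun Jc => ?_⟩
  obtain ⟨w, hpv⟩ := oddToVtx Jc hv
  have hwv : w ≠ v := by
    intro hh
    exact Jc.pmap_ne (Sum.inl v) (by rw [hpv, hh])
  have hoddw : Odd (G.degree w) := by
    have hpar := parity Jc hpv
    rw [Nat.even_add] at hpar
    exact Nat.not_even_iff_odd.mp fun he => (Nat.not_odd_iff_even.mpr (hpar.mpr he)) hv
  obtain ⟨p, hp⟩ : ∃ p : G.Walk v w, p.length ≤ 2 := by
    rcases close Jc hpv hv with hadj | ⟨z, hvz, hwz⟩
    · exact ⟨SimpleGraph.Walk.cons hadj SimpleGraph.Walk.nil, by simp⟩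
    · exact ⟨SimpleGraph.Walk.cons hvz (SimpleGraph.Walk.cons hwz.symm SimpleGraph.Walk.nil),
        by simp⟩
  rcases h w hwv hoddw with hnr | hd
  · exact hnr p.reachable
  · have := SimpleGraph.dist_le p
    omega

end GraphLie
end

section
/- Let G be a finite simple graph equipped with an adapted complex structure J, and let (u; v, w) be a complex wedge in G with w = Jv. Let G' be the graph obtained from G by deleting the two edges uv and uw (keeping all vertices). Then the restriction J' of J to the span of V ∪ (E ∖ {uv, uw}) is well defined (this subspace is J-invariant) and, under the natural identification of this subspace with 𝔫_{G'}, J' is an adapted complex structure on G'. -/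
/-!  Framework: the 2-step nilpotent Lie algebra `𝔫_G` associated to a finite simple
graph `G` (Dani–Mainkar construction), and adapted complex structures on it. -/

open scoped BigOperators

namespace GraphLie

variable {V : Type*} [Fintype V] [LinearOrder V]

open scoped Classical

/-- The natural inclusion of `𝔫_H` into `𝔫_G` for graphs `H`, `G` on the same vertex
set: it matches the vertex basis vectors, and the basis vector of each edge of `H`
which is also an edge of `G` with the corresponding basis vector of `𝔫_G`. -/
noncomputable def inclFun (H G : SimpleGraph V) (x : Niln H) : Niln G := fun b =>
  match b with
  | Sum.inl v => x (Sum.inl v)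
  | Sum.inr e =>
      if h : (e : Sym2 V) ∈ H.edgeSet then x (Sum.inr ⟨(e : Sym2 V), h⟩) else 0

/-- The graph obtained from `G` by deleting the edges `uv` and `uw` (keeping all
vertices). -/
def deleteTwo (G : SimpleGraph V) (u v w : V) : SimpleGraph V where
  Adj a b := G.Adj a b ∧ s(a, b) ≠ s(u, v) ∧ s(a, b) ≠ s(u, w)
  symm := by
    constructor
    intro a b h
    refine ⟨h.1.symm, ?_, ?_⟩
    · rw [Sym2.eq_swap]; exact h.2.1
    · rw [Sym2.eq_swap]; exact h.2.2
  loopless := ⟨fun a h => G.irrefl h.1⟩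

instance (G : SimpleGraph V) [DecidableRel G.Adj] (u v w : V) :
    DecidableRel (deleteTwo G u v w).Adj := fun a b =>
  inferInstanceAs (Decidable (G.Adj a b ∧ s(a, b) ≠ s(u, v) ∧ s(a, b) ≠ s(u, w)))

section Aux

variable (G : SimpleGraph V)

lemma deleteTwo_edgeSet_sub {u v w : V} {e : Sym2 V}
    (h : e ∈ (deleteTwo G u v w).edgeSet) : e ∈ G.edgeSet := by
  induction e using Sym2.ind with
  | _ a b => exact ((deleteTwo G u v w).mem_edgeSet.mp h).1

lemma mem_deleteTwo_edgeSet {u v w : V} {e : Sym2 V} :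
    e ∈ (deleteTwo G u v w).edgeSet ↔
      e ∈ G.edgeSet ∧ e ≠ s(u, v) ∧ e ≠ s(u, w) := by
  induction e using Sym2.ind with
  | _ a b =>
    simp only [SimpleGraph.mem_edgeSet]
    exact Iff.rfl

/-- `inclFun` as a linear map. -/
noncomputable def inclL (H G : SimpleGraph V) : Niln H →ₗ[ℝ] Niln G where
  toFun := inclFun H G
  map_add' x y := by
    funext b
    cases b with
    | inl a => rfl
    | inr e =>
      simp only [inclFun, Pi.add_apply]
      split <;> simp
  map_smul' c x := by
    funext b
    cases b with
    | inl a => rfl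
    | inr e =>
      simp only [inclFun, Pi.smul_apply, RingHom.id_apply]
      split <;> simp

/-- The linear retraction `𝔫_G → 𝔫_{G'}` for `G' = deleteTwo G u v w`. -/
noncomputable def retrL (G : SimpleGraph V) (u v w : V) :
    Niln G →ₗ[ℝ] Niln (deleteTwo G u v w) where
  toFun x b :=
    match b with
    | Sum.inl a => x (Sum.inl a)
    | Sum.inr e => x (Sum.inr ⟨(e : Sym2 V), deleteTwo_edgeSet_sub G e.2⟩)
  map_add' x y := by funext b; cases b <;> rfl
  map_smul' c x := by funext b; cases b <;> rfl

/-- The map on basis indices induced by the inclusion. -/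
def mapB (G : SimpleGraph V) (u v w : V) :
    (V ⊕ (deleteTwo G u v w).edgeSet) → V ⊕ G.edgeSet
  | Sum.inl a => Sum.inl a
  | Sum.inr e => Sum.inr ⟨(e : Sym2 V), deleteTwo_edgeSet_sub G e.2⟩

variable {G}

lemma inclL_apply_inl {H : SimpleGraph V} (x : Niln H) (a : V) :
    inclL H G x (Sum.inl a) = x (Sum.inl a) := rfl

lemma inclL_apply_inr {H : SimpleGraph V} (x : Niln H) (e : G.edgeSet) :
    inclL H G x (Sum.inr e) =
      if h : (e : Sym2 V) ∈ H.edgeSet then x (Sum.inr ⟨(e : Sym2 V), h⟩) else 0 := rfl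

lemma retr_incl {u v w : V} (x : Niln (deleteTwo G u v w)) :
    retrL G u v w (inclL (deleteTwo G u v w) G x) = x := by
  funext b
  cases b with
  | inl a => rfl
  | inr e =>
    show inclFun (deleteTwo G u v w) G x (Sum.inr ⟨(e : Sym2 V), _⟩) = x (Sum.inr e)
    simp only [inclFun]
    rw [dif_pos e.2]

lemma incl_basis {u v w : V} (b : V ⊕ (deleteTwo G u v w).edgeSet) :
    inclL (deleteTwo G u v w) G (basisVec (deleteTwo G u v w) b) =
      basisVec G (mapB G u v w b) := by
  funext c
  cases c with
  | inl a =>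
    rw [inclL_apply_inl]
    cases b with
    | inl a' => simp [basisVec, mapB, Pi.single_apply]
    | inr e' => simp [basisVec, mapB, Pi.single_apply]
  | inr e =>
    rw [inclL_apply_inr]
    cases b with
    | inl a' =>
      simp [basisVec, mapB, Pi.single_apply]
    | inr e' =>
      by_cases h : (e : Sym2 V) ∈ (deleteTwo G u v w).edgeSet
      · rw [dif_pos h]
        simp only [basisVec, mapB, Pi.single_apply, Sum.inr.injEq, Subtype.ext_iff]
      · rw [dif_neg h]
        have hne : (e : Sym2 V) ≠ (e' : Sym2 V) := by
          intro hh; exact h (hh ▸ e'.2)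
        simp [basisVec, mapB, Pi.single_apply, Subtype.ext_iff, hne]

lemma retr_edg {u v w : V} (e : G.edgeSet) :
    retrL G u v w (edg G e) =
      if h : (e : Sym2 V) ∈ (deleteTwo G u v w).edgeSet then
        edg (deleteTwo G u v w) ⟨(e : Sym2 V), h⟩ else 0 := by
  funext b
  cases b with
  | inl a =>
    show edg G e (Sum.inl a) = _
    split <;> simp [edg, Pi.single_apply]
  | inr e' =>
    show edg G e (Sum.inr ⟨(e' : Sym2 V), _⟩) = _
    by_cases h : (e : Sym2 V) ∈ (deleteTwo G u v w).edgeSet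
    · rw [dif_pos h]
      simp only [edg, Pi.single_apply, Sum.inr.injEq, Subtype.ext_iff]
    · rw [dif_neg h]
      have hne : (e' : Sym2 V) ≠ (e : Sym2 V) := by
        intro hh; exact h (hh ▸ e'.2)
      simp [edg, Pi.single_apply, Subtype.ext_iff, hne]

lemma retr_basis_inl {u v w : V} (a : V) :
    retrL G u v w (basisVec G (Sum.inl a)) =
      basisVec (deleteTwo G u v w) (Sum.inl a) := by
  funext b
  cases b with
  | inl a' => simp [retrL, basisVec, Pi.single_apply]
  | inr e => simp [retrL, basisVec, Pi.single_apply]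

lemma retrL_apply_inl {u v w : V} (y : Niln G) (a : V) :
    retrL G u v w y (Sum.inl a) = y (Sum.inl a) := rfl

lemma retrL_apply_inr {u v w : V} (y : Niln G) (e : (deleteTwo G u v w).edgeSet) :
    retrL G u v w y (Sum.inr e) =
      y (Sum.inr ⟨(e : Sym2 V), deleteTwo_edgeSet_sub G e.2⟩) := rfl

lemma incl_retr {u v w : V} (e0 f0 : G.edgeSet)
    (h0 : (e0 : Sym2 V) = s(u, v)) (h1 : (f0 : Sym2 V) = s(u, w)) (hne : e0 ≠ f0)
    (y : Niln G) :
    inclL (deleteTwo G u v w) G (retrL G u v w y) =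
      y - y (Sum.inr e0) • edg G e0 - y (Sum.inr f0) • edg G f0 := by
  funext b
  cases b with
  | inl a =>
    rw [inclL_apply_inl, retrL_apply_inl]
    simp [edg, Pi.single_apply]
  | inr e =>
    rw [inclL_apply_inr]
    by_cases hmem : (e : Sym2 V) ∈ (deleteTwo G u v w).edgeSet
    · rw [dif_pos hmem]
      have hmm := (mem_deleteTwo_edgeSet G).mp hmem
      have hee0 : e ≠ e0 := fun h => hmm.2.1 (by rw [h, h0])
      have hef0 : e ≠ f0 := fun h => hmm.2.2 (by rw [h, h1])
      have hy : retrL G u v w y (Sum.inr ⟨(e : Sym2 V), hmem⟩) = y (Sum.inr e) := rfl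
      rw [hy]
      simp [edg, Pi.single_apply, hee0, hef0]
    · rw [dif_neg hmem]
      have hcases : (e : Sym2 V) = s(u, v) ∨ (e : Sym2 V) = s(u, w) := by
        by_contra hcon
        push_neg at hcon
        exact hmem ((mem_deleteTwo_edgeSet G).mpr ⟨e.2, hcon.1, hcon.2⟩)
      rcases hcases with h | h
      · have he : e = e0 := Subtype.ext (h.trans h0.symm)
        subst he
        simp [edg, Pi.single_apply, hne, Ne.symm hne]
      · have he : e = f0 := Subtype.ext (h.trans h1.symm)
        subst he
        simp [edg, Pi.single_apply, hne, Ne.symm hne]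

lemma retr_bracketVtx [DecidableRel G.Adj] {u v w : V} (i j : V) :
    retrL G u v w (bracketVtx G i j) = bracketVtx (deleteTwo G u v w) i j := by
  by_cases hA : G.Adj i j
  · by_cases hA' : (deleteTwo G u v w).Adj i j
    · rw [bracketVtx, dif_pos hA, bracketVtx, dif_pos hA']
      have hmem : s(i, j) ∈ (deleteTwo G u v w).edgeSet := (deleteTwo G u v w).mem_edgeSet.mpr hA'
      by_cases hij : i < j
      · rw [if_pos hij, if_pos hij, retr_edg, dif_pos hmem]
      · rw [if_neg hij, if_neg hij, map_neg, retr_edg, dif_pos hmem]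
    · rw [bracketVtx, dif_pos hA, bracketVtx, dif_neg hA']
      have hmem : s(i, j) ∉ (deleteTwo G u v w).edgeSet := fun hh =>
        hA' ((deleteTwo G u v w).mem_edgeSet.mp hh)
      by_cases hij : i < j
      · rw [if_pos hij, retr_edg, dif_neg hmem]
      · rw [if_neg hij, map_neg, retr_edg, dif_neg hmem, neg_zero]
  · have hA' : ¬ (deleteTwo G u v w).Adj i j := fun hh => hA hh.1
    rw [bracketVtx, dif_neg hA, bracketVtx, dif_neg hA', map_zero]

lemma bracket_compat [DecidableRel G.Adj] {u v w : V}
    (x y : Niln (deleteTwo G u v w)) :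
    bracket (deleteTwo G u v w) x y =
      retrL G u v w (bracket G (inclL (deleteTwo G u v w) G x)
        (inclL (deleteTwo G u v w) G y)) := by
  rw [bracket, bracket, map_sum]
  refine Finset.sum_congr rfl fun i _ => ?_
  rw [map_sum]
  refine Finset.sum_congr rfl fun j _ => ?_
  rw [map_smul, retr_bracketVtx]
  rfl

end Aux

/-- Let `(u; v, w)` be a complex wedge in `(G, J)` with `w = Jv`, and
let `G'` be the graph obtained from `G` by deleting the two edges `uv` and `uw`.  Then
the restriction of `J` to the span of `V ∪ (E ∖ {uv, uw})` is well defined and, under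
the natural identification of this subspace with `𝔫_{G'}`, it is an adapted complex
structure on `G'`:  there is an adapted complex structure `J'` on `G'` which commutes
with `J` via the natural inclusion `𝔫_{G'} → 𝔫_G`. -/
theorem statement12 (G : SimpleGraph V) [DecidableRel G.Adj] (Jc : AdaptedCS G)
    (u v w : V) (hv : G.Adj u v) (hw : G.Adj u w) (hvw : v ≠ w)
    (hJv : Jc.J (vtx G v) = vtx G w)
    (hJe : ∀ e f : G.edgeSet, (e : Sym2 V) = s(u, v) → (f : Sym2 V) = s(u, w) →
      (Jc.J (edg G e) = edg G f ∨ Jc.J (edg G e) = - edg G f))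
    (hwedge : bracket G (vtx G u) (vtx G v) + Jc.J (bracket G (vtx G u) (vtx G w)) = 0) :
    ∃ J' : AdaptedCS (deleteTwo G u v w),
      ∀ x : Niln (deleteTwo G u v w),
        inclFun (deleteTwo G u v w) G (J'.J x) = Jc.J (inclFun (deleteTwo G u v w) G x) := by
  classical
  set G' := deleteTwo G u v w with hG'def
  have huw : u ≠ w := hw.ne
  set e0 : G.edgeSet := ⟨s(u, v), G.mem_edgeSet.mpr hv⟩ with he0def
  set f0 : G.edgeSet := ⟨s(u, w), G.mem_edgeSet.mpr hw⟩ with hf0def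
  have hsym : s(u, v) ≠ s(u, w) := by
    intro h
    rcases Sym2.eq_iff.mp h with ⟨-, h2⟩ | ⟨h1, -⟩
    · exact hvw h2
    · exact huw h1
  have he0f0 : e0 ≠ f0 := fun h => hsym (congrArg Subtype.val h)
  have he0notmem : (e0 : Sym2 V) ∉ G'.edgeSet := fun h =>
    ((mem_deleteTwo_edgeSet G).mp h).2.1 rfl
  have hf0notmem : (f0 : Sym2 V) ∉ G'.edgeSet := fun h =>
    ((mem_deleteTwo_edgeSet G).mp h).2.2 rfl
  -- the sign of `J` on the deleted pair of edges
  obtain ⟨ε, hεval, hJ0, hJ1⟩ :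
      ∃ ε : ℝ, (ε = 1 ∨ ε = -1) ∧ Jc.J (edg G e0) = ε • edg G f0 ∧
        Jc.J (edg G f0) = (-ε) • edg G e0 := by
    rcases hJe e0 f0 rfl rfl with h | h
    · refine ⟨1, Or.inl rfl, by simpa using h, ?_⟩
      have h2 := congrArg Jc.J h
      rw [Jc.j_squared] at h2
      rw [neg_one_smul]
      exact h2.symm
    · refine ⟨-1, Or.inr rfl, by simpa using h, ?_⟩
      have h2 := congrArg Jc.J h
      rw [Jc.j_squared, map_neg, neg_eq_iff_eq_neg, neg_neg] at h2
      rw [neg_neg, one_smul]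
      exact h2.symm
  -- normalized form of adaptedness
  have adaptedS : ∀ c : V ⊕ G.edgeSet, ∃ (s : ℝ) (b' : V ⊕ G.edgeSet),
      (s = 1 ∨ s = -1) ∧ Jc.J (basisVec G c) = s • basisVec G b' := by
    intro c
    rcases Jc.adapted c with ⟨b', h⟩ | ⟨b', h⟩
    · exact ⟨1, b', Or.inl rfl, by simpa using h⟩
    · exact ⟨-1, b', Or.inr rfl, by rw [h, neg_one_smul]⟩
  -- key vanishing of the deleted-edge coordinates of `J` of a surviving basis vector
  have key : ∀ c : V ⊕ G.edgeSet, c ≠ Sum.inr e0 → c ≠ Sum.inr f0 →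
      Jc.J (basisVec G c) (Sum.inr e0) = 0 ∧ Jc.J (basisVec G c) (Sum.inr f0) = 0 := by
    intro c hc0 hc1
    obtain ⟨s, b', hs, hb'⟩ := adaptedS c
    constructor
    · rw [hb']
      by_cases hbe : b' = Sum.inr e0
      · exfalso
        subst hbe
        have h2 := congrArg Jc.J hb'
        rw [Jc.j_squared, map_smul] at h2
        rw [show basisVec G (Sum.inr e0) = edg G e0 from rfl, hJ0, smul_smul] at h2
        have h3 := congrFun h2 c
        rw [Pi.neg_apply, Pi.smul_apply] at h3
        have hcc : basisVec G c c = 1 := Pi.single_eq_same c 1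
        have hfc : edg G f0 c = 0 := by
          simp [edg, Pi.single_apply, Ne.symm hc1, hc1]
        rw [hcc, hfc, smul_eq_mul, mul_zero] at h3
        norm_num at h3
      · rw [Pi.smul_apply]
        have : basisVec G b' (Sum.inr e0) = 0 := by
          simp [basisVec, Pi.single_apply, Ne.symm hbe, hbe]
        rw [this, smul_eq_mul, mul_zero]
    · rw [hb']
      by_cases hbf : b' = Sum.inr f0
      · exfalso
        subst hbf
        have h2 := congrArg Jc.J hb'
        rw [Jc.j_squared, map_smul] at h2
        rw [show basisVec G (Sum.inr f0) = edg G f0 from rfl, hJ1, smul_smul] at h2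
        have h3 := congrFun h2 c
        rw [Pi.neg_apply, Pi.smul_apply] at h3
        have hcc : basisVec G c c = 1 := Pi.single_eq_same c 1
        have hec : edg G e0 c = 0 := by
          simp [edg, Pi.single_apply, Ne.symm hc0, hc0]
        rw [hcc, hec, smul_eq_mul, mul_zero] at h3
        norm_num at h3
      · rw [Pi.smul_apply]
        have : basisVec G b' (Sum.inr f0) = 0 := by
          simp [basisVec, Pi.single_apply, Ne.symm hbf, hbf]
        rw [this, smul_eq_mul, mul_zero]
  -- the image under `mapB` of a surviving basis index avoids the deleted edges
  have hmapB : ∀ b : V ⊕ G'.edgeSet,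
      mapB G u v w b ≠ Sum.inr e0 ∧ mapB G u v w b ≠ Sum.inr f0 := by
    intro b
    cases b with
    | inl a => exact ⟨fun h => by simp [mapB] at h, fun h => by simp [mapB] at h⟩
    | inr e =>
      have he := (mem_deleteTwo_edgeSet G).mp e.2
      exact ⟨fun h => he.2.1 (congrArg Subtype.val (Sum.inr_injective h)),
        fun h => he.2.2 (congrArg Subtype.val (Sum.inr_injective h))⟩
  -- commutation on basis vectors
  have hcomm_basis : ∀ b : V ⊕ G'.edgeSet,
      inclL G' G (retrL G u v w (Jc.J (inclL G' G (basisVec G' b)))) =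
        Jc.J (inclL G' G (basisVec G' b)) := by
    intro b
    rw [incl_basis]
    obtain ⟨k0, k1⟩ := key (mapB G u v w b) (hmapB b).1 (hmapB b).2
    rw [incl_retr e0 f0 rfl rfl he0f0, k0, k1]
    simp
  -- commutation in general, by linearity
  have hcomm : ∀ x : Niln G',
      inclL G' G (retrL G u v w (Jc.J (inclL G' G x))) = Jc.J (inclL G' G x) := by
    have hx : (inclL G' G ∘ₗ retrL G u v w ∘ₗ Jc.J ∘ₗ inclL G' G) =
        (Jc.J ∘ₗ inclL G' G) := by
      refine LinearMap.pi_ext fun i x => ?_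
      have hsingle : (Pi.single i x : Niln G') = x • basisVec G' i := by
        rw [basisVec, ← Pi.single_smul, smul_eq_mul, mul_one]
      rw [hsingle, map_smul, map_smul]
      simp only [LinearMap.comp_apply]
      rw [hcomm_basis i]
    intro x
    have hy := LinearMap.congr_fun hx x
    simpa only [LinearMap.comp_apply] using hy
  refine ⟨⟨retrL G u v w ∘ₗ Jc.J ∘ₗ inclL G' G, ?_, ?_, ?_⟩, ?_⟩
  · -- J' squared
    intro x
    simp only [LinearMap.comp_apply]
    rw [hcomm x, Jc.j_squared, map_neg, retr_incl]
  · -- integrability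
    intro x y
    simp only [LinearMap.comp_apply]
    rw [bracket_compat x y, bracket_compat, bracket_compat, bracket_compat,
      hcomm x, hcomm y]
    have hmid : retrL G u v w (Jc.J (inclL G' G
        (retrL G u v w (bracket G (Jc.J (inclL G' G x)) (inclL G' G y)) +
         retrL G u v w (bracket G (inclL G' G x) (Jc.J (inclL G' G y)))))) =
        retrL G u v w (Jc.J (bracket G (Jc.J (inclL G' G x)) (inclL G' G y) +
          bracket G (inclL G' G x) (Jc.J (inclL G' G y)))) := by
      rw [← map_add (retrL G u v w), incl_retr e0 f0 rfl rfl he0f0]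
      simp only [map_sub, map_smul, hJ0, hJ1, retr_edg, dif_neg he0notmem,
        dif_neg hf0notmem]
      rw [dif_neg (show (f0 : Sym2 V) ∉ (deleteTwo G u v w).edgeSet from hf0notmem),
        dif_neg (show (e0 : Sym2 V) ∉ (deleteTwo G u v w).edgeSet from he0notmem)]
      simp
    rw [hmid, ← map_add (retrL G u v w), ← map_sub (retrL G u v w),
      Jc.integrable, map_zero]
  · -- adaptedness
    intro b
    simp only [LinearMap.comp_apply]
    rw [incl_basis]
    obtain ⟨s, b', hs, hb'⟩ := adaptedS (mapB G u v w b)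
    obtain ⟨k0, k1⟩ := key (mapB G u v w b) (hmapB b).1 (hmapB b).2
    rw [hb'] at k0 k1
    have hbe : b' ≠ Sum.inr e0 := by
      intro h
      subst h
      simp only [basisVec, Pi.smul_apply, Pi.single_eq_same, smul_eq_mul,
        mul_one] at k0
      rcases hs with h | h <;> rw [h] at k0 <;> norm_num at k0
    have hbf : b' ≠ Sum.inr f0 := by
      intro h
      subst h
      simp only [basisVec, Pi.smul_apply, Pi.single_eq_same, smul_eq_mul,
        mul_one] at k1
      rcases hs with h | h <;> rw [h] at k1 <;> norm_num at k1
    rw [hb', map_smul]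
    cases b' with
    | inl a =>
      rw [retr_basis_inl]
      rcases hs with h | h
      · exact Or.inl ⟨Sum.inl a, by rw [h, one_smul]⟩
      · exact Or.inr ⟨Sum.inl a, by rw [h, neg_one_smul]⟩
    | inr e =>
      have hmem : (e : Sym2 V) ∈ G'.edgeSet := by
        rw [mem_deleteTwo_edgeSet]
        refine ⟨e.2, fun h => hbe ?_, fun h => hbf ?_⟩
        · exact congrArg Sum.inr (Subtype.ext h)
        · exact congrArg Sum.inr (Subtype.ext h)
      rw [show basisVec G (Sum.inr e) = edg G e from rfl, retr_edg, dif_pos hmem]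
      rcases hs with h | h
      · exact Or.inl ⟨Sum.inr ⟨(e : Sym2 V), hmem⟩, by rw [h, one_smul]; rfl⟩
      · exact Or.inr ⟨Sum.inr ⟨(e : Sym2 V), hmem⟩, by rw [h, neg_one_smul]; rfl⟩
  · -- the commutation statement
    intro x
    exact hcomm x

end GraphLie
end
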